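/- (Lemma 2.) If a pinpointing state A^pin is pinpointing saturated (no rule is pinpointing applicable to it), then for every valuation V the projection A_V is saturated (no rule is classically applicable to it). -/

import Mathlib

/-- Monotone Boolean formulas over propositional variables of type `V`. -/
inductive MBF (V : Type) : Type
  | var : V → MBF V
  | top : MBF V
  | bot : MBF V
  | and : MBF V → MBF V → MBF V
  | or  : MBF V → MBF V → MBF V

/-- Satisfaction of a monotone Boolean formula by a valuation (a set of variables). -/
def MBF.sat {V : Type} (v : Set V) : MBF V → Prop
  | .var p => p ∈ v
  | .top => True
  | .bot => False
  | .and φ ψ => φ.sat v ∧ ψ.sat v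
  | .or φ ψ => φ.sat v ∨ ψ.sat v

/-- `φ` entails `ψ`: every valuation satisfying `φ` satisfies `ψ`. -/
def MBF.entails {V : Type} (φ ψ : MBF V) : Prop :=
  ∀ v : Set V, φ.sat v → ψ.sat v

/-- A rule: a pair of finite sets of consequences (premises and results). -/
structure Rule (C : Type) where
  pre : Finset C
  res : Finset C

/-- A rule `R` is applicable to a state `A` if `pre R ⊆ A` and `res R ⊄ A`. -/
def applicable {C : Type} (R : Rule C) (A : Set C) : Prop :=
  ↑R.pre ⊆ A ∧ ¬ (↑R.res ⊆ A)

/-- Classical rule application: `A →_R B`. -/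
def step {C : Type} (R : Rule C) (A B : Set C) : Prop :=
  applicable R A ∧ B = A ∪ ↑R.res

/-- One step with some rule from the fixed set of rules `Rs`. -/
def stepAny {C : Type} (Rs : Set (Rule C)) (A B : Set C) : Prop :=
  ∃ R ∈ Rs, step R A B

/-- Reflexive-transitive closure of classical rule application: `A →* B`. -/
def steps {C : Type} (Rs : Set (Rule C)) : Set C → Set C → Prop :=
  Relation.ReflTransGen (stepAny Rs)

/-- A state is saturated if no rule (from `Rs`) is applicable to it. -/
def saturated {C : Type} (Rs : Set (Rule C)) (A : Set C) : Prop :=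
  ∀ R ∈ Rs, ¬ applicable R A

/-- A pinpointing state: a labelling of a finite set of consequences with
monotone Boolean formulas (`none` = unlabelled). -/
structure PState (C V : Type) where
  lab : C → Option (MBF V)
  finite : {c : C | lab c ≠ none}.Finite

/-- The label of `α` in `A`, which is `⊥` if `α` is unlabelled. -/
def PState.labOf {C V : Type} (A : PState C V) (α : C) : MBF V :=
  (A.lab α).getD .bot

/-- `fm(X, A)`: the conjunction of the labels of the elements of `X`. -/
noncomputable def fm {C V : Type} (X : Finset C) (A : PState C V) : MBF V :=
  (X.toList.map A.labOf).foldr .and .top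

/-- `R` is pinpointing applicable to `A` if `fm(pre R, A)` does not entail `fm(res R, A)`. -/
def pinApplicable {C V : Type} (R : Rule C) (A : PState C V) : Prop :=
  ¬ (fm R.pre A).entails (fm R.res A)

open Classical in
/-- Pinpointing rule application `A ⇀_R B`: each `α ∈ res R` is relabelled with
`φ_α ∨ fm(pre R, A)` (with `φ_α = ⊥` if `α` was unlabelled); all other labels unchanged. -/
def pinStep {C V : Type} (R : Rule C) (A B : PState C V) : Prop :=
  pinApplicable R A ∧
  ∀ α : C, B.lab α =
    if α ∈ R.res then some ((A.labOf α).or (fm R.pre A)) else A.lab α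

/-- One pinpointing step with some rule from `Rs`. -/
def pinStepAny {C V : Type} (Rs : Set (Rule C)) (A B : PState C V) : Prop :=
  ∃ R ∈ Rs, pinStep R A B

/-- Reflexive-transitive closure of pinpointing rule application: `A ⇀* B`. -/
def pinSteps {C V : Type} (Rs : Set (Rule C)) : PState C V → PState C V → Prop :=
  Relation.ReflTransGen (pinStepAny Rs)

/-- A pinpointing state is pinpointing saturated if no rule is pinpointing applicable. -/
def pinSaturated {C V : Type} (Rs : Set (Rule C)) (A : PState C V) : Prop :=
  ∀ R ∈ Rs, ¬ pinApplicable R A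

/-- The projection `A_V` of a pinpointing state under a valuation `v`. -/
def PState.proj {C V : Type} (A : PState C V) (v : Set V) : Set C :=
  {α | ∃ φ, A.lab α = some φ ∧ φ.sat v}

open Classical in
/-- `O^pin`: the initial pinpointing state labelling each axiom `α ∈ O` with the
propositional variable `labv α`. -/
noncomputable def initPState {C V : Type} (labv : C → V) (O : Finset C) : PState C V :=
  ⟨fun α => if α ∈ O then some (.var (labv α)) else none,
   Set.Finite.subset O.finite_toSet (by
     intro c hc
     simp only [Set.mem_setOf_eq, ne_eq, ite_eq_right_iff, not_forall] at hc
     exact hc.choose)⟩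

/-! The key fact is that `v ⊨ fm(X, A^pin)` holds exactly when `X ⊆ A_v`. Hence if `R` is applicable to
`A_v`, then `v` satisfies `fm(pre R, A^pin)` but not `fm(res R, A^pin)`, so the former does not entail
the latter and `R` is pinpointing applicable to `A^pin`. -/

theorem MBF.sat_foldr_and_iff {V : Type} (v : Set V) (l : List (MBF V)) :
    (l.foldr MBF.and MBF.top).sat v ↔ ∀ φ ∈ l, φ.sat v := by
  induction l with
  | nil => simp [MBF.sat]
  | cons φ l ih => simp [MBF.sat, ih]

theorem fm_sat_iff {C V : Type} (X : Finset C) (A : PState C V) (v : Set V) :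
    (fm X A).sat v ↔ ∀ α ∈ X, (A.labOf α).sat v := by
  simp [fm, MBF.sat_foldr_and_iff]

theorem PState.mem_proj_iff {C V : Type} (A : PState C V) (v : Set V) (α : C) :
    α ∈ A.proj v ↔ (A.labOf α).sat v := by
  cases hα : A.lab α <;> simp [PState.proj, PState.labOf, hα, MBF.sat]

theorem PState.coe_subset_proj_iff {C V : Type} (A : PState C V) (v : Set V) (X : Finset C) :
    ↑X ⊆ A.proj v ↔ (fm X A).sat v := by
  simp only [fm_sat_iff, Set.subset_def, Finset.mem_coe, PState.mem_proj_iff]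

theorem pinApplicable_of_applicable_proj {C V : Type} {R : Rule C} {A : PState C V} {v : Set V}
    (hR : applicable R (A.proj v)) : pinApplicable R A := fun hent =>
  hR.2 <| (A.coe_subset_proj_iff v _).2 <| hent v <| (A.coe_subset_proj_iff v _).1 hR.1

/-- Lemma 2: if `A^pin` is pinpointing saturated, then for every valuation `v`
the projection `A_v` is saturated. -/
theorem stmt7 {C V : Type} (Rs : Set (Rule C)) (Apin : PState C V)
    (h : pinSaturated Rs Apin) (v : Set V) :
    saturated Rs (Apin.proj v) :=
  fun R hR hRv => h R hR (pinApplicable_of_applicable_proj hRv)
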